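/- Given positive reals a, b and ε > 0, there exist positive reals a_0, b_0 with a_0 + b_0 < ε such that every restricted rotation f of type (a,b) on I = [p,q) (assuming a + b ≤ length of I) can be written as f = h ∘ g, where h is a restricted rotation of type (a_0, b_0) and g is a finite product of interval swap maps. -/

import Mathlib

open scoped TensorProduct

/-- An interval exchange transformation of the half-open interval `[p, q)`:
a bijection of `[p, q)` onto itself, extended by the identity outside,
which is a translation on each piece of a finite partition of `[p, q)`
into half-open intervals. -/
def IsIET (p q : ℝ) (f : ℝ → ℝ) : Prop :=
  Set.BijOn f (Set.Ico p q) (Set.Ico p q) ∧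
  (∀ x, x ∉ Set.Ico p q → f x = x) ∧
  ∃ (n : ℕ) (pt : Fin (n + 1) → ℝ),
    StrictMono pt ∧ pt 0 = p ∧ pt (Fin.last n) = q ∧
    ∀ i : Fin n, ∃ t : ℝ,
      ∀ x ∈ Set.Ico (pt i.castSucc) (pt i.succ), f x = x + t

/-- A restricted rotation of type `(a, b)` on `[p, q)`: it exchanges two
adjacent half-open intervals of lengths `a` (on the left) and `b` (on the
right) by translation, fixing the rest of the line. -/
def IsRestrictedRotation (p q a b : ℝ) (f : ℝ → ℝ) : Prop :=
  0 < a ∧ 0 < b ∧ ∃ x : ℝ, p ≤ x ∧ x + a + b ≤ q ∧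
    (∀ y ∈ Set.Ico x (x + a), f y = y + b) ∧
    (∀ y ∈ Set.Ico (x + a) (x + a + b), f y = y - a) ∧
    (∀ y, y ∉ Set.Ico x (x + a + b) → f y = y)

/-- An interval swap map of type `a` on `[p, q)`: it interchanges two
disjoint half-open intervals of length `a` by translation, fixing the
rest of the line. -/
def IsIntervalSwap (p q a : ℝ) (f : ℝ → ℝ) : Prop :=
  0 < a ∧ ∃ x y : ℝ, p ≤ x ∧ x + a ≤ y ∧ y + a ≤ q ∧
    (∀ z ∈ Set.Ico x (x + a), f z = z + (y - x)) ∧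
    (∀ z ∈ Set.Ico y (y + a), f z = z - (y - x)) ∧
    (∀ z, z ∉ Set.Ico x (x + a) ∪ Set.Ico y (y + a) → f z = z)

/-- `f` is a finite product (composition) of interval swap maps on `[p, q)`. -/
def IsSwapProduct (p q : ℝ) (f : ℝ → ℝ) : Prop :=
  ∃ L : List (ℝ → ℝ), (∀ g ∈ L, ∃ a, IsIntervalSwap p q a g) ∧
    f = L.foldr (· ∘ ·) id

/-- `ξ ∈ ℝ ⊗[ℚ] ℝ` is the SAF sum of `f` computed from some partition of
`[p, q)` into half-open intervals on each of which `f` is a translation. -/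
def HasSAF (p q : ℝ) (f : ℝ → ℝ) (ξ : ℝ ⊗[ℚ] ℝ) : Prop :=
  ∃ (n : ℕ) (pt : Fin (n + 1) → ℝ) (t : Fin n → ℝ),
    StrictMono pt ∧ pt 0 = p ∧ pt (Fin.last n) = q ∧
    (∀ i : Fin n, ∀ x ∈ Set.Ico (pt i.castSucc) (pt i.succ), f x = x + t i) ∧
    ξ = ∑ i : Fin n, (pt i.succ - pt i.castSucc) ⊗ₜ[ℚ] t i


/-!
A restricted rotation of type `(a, b)` with `a < b` is one of type `(a, b - a)` composed with
the swap of the two length-`a` blocks at its left end (symmetrically when `b < a`), and one of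
type `(a, a)` is a swap, hence equal to a rotation of type `(δ, δ)` composed with two swaps for
any `δ ≤ a`. So the subtractive Euclidean algorithm on `(a, b)` factors `f`: it either reaches
a diagonal pair or makes the pair smaller than any `ε`, because the smaller entry at least
halves within every two rounds of repeated subtraction.
-/

/-- Closure under the steps of the subtractive Euclidean algorithm on pairs of positive reals,
with the pairs of sum `< ε` and the diagonal as terminal states. -/
structure SubtractiveClosed (ε : ℝ) (P : ℝ → ℝ → Prop) : Prop where
  of_add_lt : ∀ a b, 0 < a → 0 < b → a + b < ε → P a b
  diag : ∀ a, 0 < a → P a a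
  of_sub_left : ∀ a b, 0 < a → a < b → P a (b - a) → P a b
  of_sub_right : ∀ a b, 0 < b → b < a → P (a - b) b → P a b

namespace SubtractiveClosed

variable {ε : ℝ} {P : ℝ → ℝ → Prop}

theorem swap (hP : SubtractiveClosed ε P) : SubtractiveClosed ε fun a b => P b a where
  of_add_lt a b ha hb h := hP.of_add_lt b a hb ha (by linarith)
  diag a ha := hP.diag a ha
  of_sub_left a b ha hab h := hP.of_sub_right b a ha hab h
  of_sub_right a b hb hba h := hP.of_sub_left b a hb hba h

theorem of_forall_le (hP : SubtractiveClosed ε P) {a b : ℝ} (ha : 0 < a) (hb : 0 < b)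
    (h : ∀ r, 0 < r → r ≤ a → P a r) : P a b := by
  obtain ⟨k, hk⟩ := Archimedean.arch b ha
  induction k generalizing b with
  | zero => simp only [zero_nsmul] at hk; linarith
  | succ k ih =>
    rcases le_or_gt b a with hba | hab
    · exact h b hb hba
    · rw [succ_nsmul] at hk
      exact hP.of_sub_left a b ha hab (ih (by linarith) (by linarith))

theorem of_le_two_pow_mul (hP : SubtractiveClosed ε P) (n : ℕ) {a b : ℝ} (ha : 0 < a)
    (hb : 0 < b) (h : a ≤ 2 ^ n * (ε / 2)) : P a b := by
  induction n generalizing P a b with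
  | zero =>
    refine hP.of_forall_le ha hb fun r hr hra => ?_
    rcases hra.lt_or_eq with hra | rfl
    · exact hP.of_add_lt a r ha hr (by simp only [pow_zero, one_mul] at h; linarith)
    · exact hP.diag r hr
  | succ n ih =>
    rw [pow_succ] at h
    refine hP.of_forall_le ha hb fun r hr hra => ?_
    rcases hra.lt_or_eq with hra | rfl
    · rcases le_or_gt r (a / 2) with hr2 | hr2
      · exact ih hP.swap hr ha (by linarith)
      · exact hP.of_sub_right a r hr hra (ih hP (by linarith) hr (by linarith))
    · exact hP.diag r hr

theorem holds (hP : SubtractiveClosed ε P) (hε : 0 < ε) {a b : ℝ} (ha : 0 < a) (hb : 0 < b) :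
    P a b := by
  obtain ⟨n, hn⟩ := pow_unbounded_of_one_lt (a / (ε / 2)) one_lt_two
  exact hP.of_le_two_pow_mul n ha hb ((div_lt_iff₀ (by linarith)).1 hn).le

end SubtractiveClosed

theorem List.foldr_comp_append {α : Type*} (L L' : List (α → α)) :
    (L ++ L').foldr (· ∘ ·) id = L.foldr (· ∘ ·) id ∘ L'.foldr (· ∘ ·) id := by
  induction L with
  | nil => rfl
  | cons f L ih => simp only [List.cons_append, List.foldr_cons, ih]; rfl

theorem isSwapProduct_id (p q : ℝ) : IsSwapProduct p q id :=
  ⟨[], by simp, rfl⟩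

theorem IsIntervalSwap.isSwapProduct {p q c : ℝ} {s : ℝ → ℝ} (hs : IsIntervalSwap p q c s) :
    IsSwapProduct p q s :=
  ⟨[s], by simpa using ⟨c, hs⟩, rfl⟩

theorem IsSwapProduct.comp {p q : ℝ} {g g' : ℝ → ℝ} (hg : IsSwapProduct p q g)
    (hg' : IsSwapProduct p q g') : IsSwapProduct p q (g ∘ g') := by
  obtain ⟨L, hL, rfl⟩ := hg
  obtain ⟨L', hL', rfl⟩ := hg'
  refine ⟨L ++ L', fun s hs => ?_, (List.foldr_comp_append L L').symm⟩
  rcases List.mem_append.1 hs with hs | hs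
  exacts [hL s hs, hL' s hs]

/-- The restricted rotation of type `(a, b)` whose support starts at `x`. -/
noncomputable def restrictedRotation (x a b : ℝ) (y : ℝ) : ℝ :=
  if x ≤ y then
    if y < x + a then y + b
    else if y < x + a + b then y - a else y
  else y

theorem isRestrictedRotation_restrictedRotation {p q a b x : ℝ} (ha : 0 < a) (hb : 0 < b)
    (hpx : p ≤ x) (hxq : x + a + b ≤ q) :
    IsRestrictedRotation p q a b (restrictedRotation x a b) := by
  refine ⟨ha, hb, x, hpx, hxq, ?_, ?_, ?_⟩
  · rintro y ⟨h₁, h₂⟩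
    rw [restrictedRotation, if_pos h₁, if_pos h₂]
  · rintro y ⟨h₁, h₂⟩
    rw [restrictedRotation, if_pos (by linarith), if_neg h₁.not_gt, if_pos h₂]
  · intro y hy
    rcases not_and_or.1 hy with hy | hy <;> simp only [not_le, not_lt] at hy <;>
      simp only [restrictedRotation] <;> split_ifs <;> first | rfl | linarith

theorem IsRestrictedRotation.exists_eq_restrictedRotation {p q a b : ℝ} {f : ℝ → ℝ}
    (hf : IsRestrictedRotation p q a b f) :
    ∃ x, p ≤ x ∧ x + a + b ≤ q ∧ f = restrictedRotation x a b := by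
  obtain ⟨-, -, x, hpx, hxq, hleft, hright, hout⟩ := hf
  refine ⟨x, hpx, hxq, funext fun y => ?_⟩
  simp only [restrictedRotation]
  split_ifs with h₁ h₂ h₃
  · exact hleft y ⟨h₁, h₂⟩
  · exact hright y ⟨not_lt.1 h₂, h₃⟩
  · exact hout y fun hy => h₃ hy.2
  · exact hout y fun hy => h₁ hy.1

theorem isIntervalSwap_restrictedRotation_self {p q c x : ℝ} (hc : 0 < c) (hpx : p ≤ x)
    (hxq : x + c + c ≤ q) : IsIntervalSwap p q c (restrictedRotation x c c) := by
  refine ⟨hc, x, x + c, hpx, le_rfl, hxq, ?_, ?_, ?_⟩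
  · rintro z ⟨h₁, h₂⟩
    rw [restrictedRotation, if_pos h₁, if_pos h₂]
    ring
  · rintro z ⟨h₁, h₂⟩
    rw [restrictedRotation, if_pos (by linarith), if_neg h₁.not_gt, if_pos h₂]
    ring
  · intro z hz
    simp only [Set.mem_union, Set.mem_Ico, not_or, not_and, not_lt] at hz
    obtain ⟨hfirst, hsecond⟩ := hz
    rcases le_or_gt x z with hxz | hzx
    · have hz₂ := hsecond (hfirst hxz)
      rw [restrictedRotation, if_pos hxz, if_neg (by linarith), if_neg (by linarith)]
    · rw [restrictedRotation, if_neg hzx.not_ge]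

theorem restrictedRotation_self_comp_self (x c : ℝ) :
    restrictedRotation x c c ∘ restrictedRotation x c c = id := by
  funext z
  simp only [restrictedRotation, Function.comp, id]
  split_ifs <;> linarith

theorem restrictedRotation_eq_comp_of_lt {x a b : ℝ} (ha : 0 < a) (hab : a < b) :
    restrictedRotation x a b =
      restrictedRotation (x + a) a (b - a) ∘ restrictedRotation x a a := by
  funext y
  simp only [restrictedRotation, Function.comp]
  split_ifs <;> linarith

theorem restrictedRotation_eq_comp_of_gt {x a b : ℝ} (hb : 0 < b) (hba : b < a) :
    restrictedRotation x a b =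
      restrictedRotation x (a - b) b ∘ restrictedRotation (x + (a - b)) b b := by
  funext y
  simp only [restrictedRotation, Function.comp]
  split_ifs <;> linarith

def RotationReduces (p q a b a₀ b₀ : ℝ) : Prop :=
  ∀ f : ℝ → ℝ, IsRestrictedRotation p q a b f →
    ∃ h g : ℝ → ℝ, IsRestrictedRotation p q a₀ b₀ h ∧ IsSwapProduct p q g ∧ f = h ∘ g

namespace RotationReduces

variable {p q a b a₁ b₁ a₀ b₀ : ℝ}

theorem trans (h₁ : RotationReduces p q a b a₁ b₁) (h₂ : RotationReduces p q a₁ b₁ a₀ b₀) :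
    RotationReduces p q a b a₀ b₀ := by
  intro f hf
  obtain ⟨h, g, hh, hg, rfl⟩ := h₁ f hf
  obtain ⟨h', g', hh', hg', rfl⟩ := h₂ h hh
  exact ⟨h', g' ∘ g, hh', hg'.comp hg, rfl⟩

theorem of_lt (ha : 0 < a) (hab : a < b) : RotationReduces p q a b a (b - a) := by
  intro f hf
  obtain ⟨x, hpx, hxq, rfl⟩ := hf.exists_eq_restrictedRotation
  exact ⟨_, _, isRestrictedRotation_restrictedRotation ha (by linarith) (by linarith)
      (by linarith),
    (isIntervalSwap_restrictedRotation_self ha hpx (by linarith)).isSwapProduct,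
    restrictedRotation_eq_comp_of_lt ha hab⟩

theorem of_gt (hb : 0 < b) (hba : b < a) : RotationReduces p q a b (a - b) b := by
  intro f hf
  obtain ⟨x, hpx, hxq, rfl⟩ := hf.exists_eq_restrictedRotation
  exact ⟨_, _, isRestrictedRotation_restrictedRotation (by linarith) hb hpx (by linarith),
    (isIntervalSwap_restrictedRotation_self hb (by linarith) (by linarith)).isSwapProduct,
    restrictedRotation_eq_comp_of_gt hb hba⟩

theorem self_of_le {δ : ℝ} (hδ : 0 < δ) (hδa : δ ≤ a) : RotationReduces p q a a δ δ := by
  intro f hf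
  obtain ⟨x, hpx, hxq, rfl⟩ := hf.exists_eq_restrictedRotation
  have hδq : x + δ + δ ≤ q := by linarith
  refine ⟨restrictedRotation x δ δ, restrictedRotation x δ δ ∘ restrictedRotation x a a,
    isRestrictedRotation_restrictedRotation hδ hδ hpx hδq,
    (isIntervalSwap_restrictedRotation_self hδ hpx hδq).isSwapProduct.comp
      (isIntervalSwap_restrictedRotation_self (hδ.trans_le hδa) hpx hxq).isSwapProduct, ?_⟩
  rw [← Function.comp_assoc, restrictedRotation_self_comp_self, Function.id_comp]

end RotationReduces

theorem subtractiveClosed_exists_rotationReduces (p q : ℝ) {ε : ℝ} (hε : 0 < ε) :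
    SubtractiveClosed ε fun a b =>
      ∃ a₀ b₀ : ℝ, 0 < a₀ ∧ 0 < b₀ ∧ a₀ + b₀ < ε ∧ RotationReduces p q a b a₀ b₀ where
  of_add_lt a b ha hb h := ⟨a, b, ha, hb, h, fun f hf => ⟨f, id, hf, isSwapProduct_id p q, rfl⟩⟩
  diag a ha :=
    have hδ : 0 < min a (ε / 3) := lt_min ha (by linarith)
    ⟨_, _, hδ, hδ, by linarith [min_le_right a (ε / 3)],
      RotationReduces.self_of_le hδ (min_le_left _ _)⟩
  of_sub_left a b ha hab := fun ⟨a₀, b₀, ha₀, hb₀, hsum, h⟩ =>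
    ⟨a₀, b₀, ha₀, hb₀, hsum, (RotationReduces.of_lt ha hab).trans h⟩
  of_sub_right a b hb hba := fun ⟨a₀, b₀, ha₀, hb₀, hsum, h⟩ =>
    ⟨a₀, b₀, ha₀, hb₀, hsum, (RotationReduces.of_gt hb hba).trans h⟩

theorem rotation_factorization_general (p q a b ε : ℝ)
    (ha : 0 < a) (hb : 0 < b) (hε : 0 < ε) :
    ∃ a₀ b₀ : ℝ, 0 < a₀ ∧ 0 < b₀ ∧ a₀ + b₀ < ε ∧
      ∀ f : ℝ → ℝ, IsRestrictedRotation p q a b f →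
        ∃ h g : ℝ → ℝ, IsRestrictedRotation p q a₀ b₀ h ∧
          IsSwapProduct p q g ∧ f = h ∘ g :=
  (subtractiveClosed_exists_rotationReduces p q hε).holds hε ha hb

/-- Given `a, b, ε > 0`, there are positive reals `a₀, b₀` with `a₀ + b₀ < ε`
such that every restricted rotation of type `(a, b)` on `[p, q)` factors as a
restricted rotation of type `(a₀, b₀)` followed by a product of interval swap
maps. -/
theorem rotation_factorization (p q a b ε : ℝ) (hpq : p < q)
    (ha : 0 < a) (hb : 0 < b) (hε : 0 < ε) (hab : a + b ≤ q - p) :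
    ∃ a₀ b₀ : ℝ, 0 < a₀ ∧ 0 < b₀ ∧ a₀ + b₀ < ε ∧
      ∀ f : ℝ → ℝ, IsRestrictedRotation p q a b f →
        ∃ h g : ℝ → ℝ, IsRestrictedRotation p q a₀ b₀ h ∧
          IsSwapProduct p q g ∧ f = h ∘ g :=
  rotation_factorization_general p q a b ε ha hb hε
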